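/- Fix N ≥ 1, constants α_a, β_a, μ_a ∈ ℝ with β_a ≠ 0, and constants τ_{ab} ∈ ℝ for a ≠ b with τ_{ab} = −τ_{ba}. On the open set U = {(S_a,I_a,R_a)_{a=1}^N ∈ ℝ^{3N} : β_a·S_a − μ_a > 0 for all a}, define the skew-symmetric matrix-valued map π₂ with entries π₂_{S_a I_a} = −β_a·S_a·I_a + μ_a·I_a, π₂_{S_a R_a} = β_a·S_a·I_a − μ_a·I_a, π₂_{I_a R_a} = −β_a·S_a·I_a + μ_a·I_a, π₂_{R_a R_b} = τ_{ab} for a ≠ b, all other independent entries zero, and the Hamiltonian H₂ = −∑_{k=1}^N (R_k + (α_k/β_k)·log(β_k·S_k − μ_k)). Then (i) π₂ satisfies the Jacobi identity on U, and (ii) for all points of U, π₂·∇H₂ has components (−β_a·S_a·I_a + μ_a·I_a, β_a·S_a·I_a − (α_a+μ_a)·I_a, α_a·I_a − ∑_{k≠a} τ_{ak}) in the (S_a, I_a, R_a) coordinates. -/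

import Mathlib

/-- A pointwise skew-symmetric matrix-valued map satisfies the Jacobi identity on a set `U`
if for all `x ∈ U` and indices `i j k`,
`∑ l, (P_{l i}(x)·∂_l P_{j k}(x) + P_{l j}(x)·∂_l P_{k i}(x) + P_{l k}(x)·∂_l P_{i j}(x)) = 0`. -/
def JacobiIdentityOn {n : Type*} [Fintype n] [DecidableEq n]
    (P : (n → ℝ) → Matrix n n ℝ) (U : Set (n → ℝ)) : Prop :=
  ∀ x ∈ U, ∀ i j k : n,
    ∑ l : n,
      (P x l i * fderiv ℝ (fun y => P y j k) x (Pi.single l 1) +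
        P x l j * fderiv ℝ (fun y => P y k i) x (Pi.single l 1) +
        P x l k * fderiv ℝ (fun y => P y i j) x (Pi.single l 1)) = 0

/-- The Hamiltonian vector field `π(x)·∇H(x)` of a matrix-valued map `P` and Hamiltonian `H`. -/
noncomputable def hamVF {n : Type*} [Fintype n] [DecidableEq n]
    (P : (n → ℝ) → Matrix n n ℝ) (H : (n → ℝ) → ℝ) (x : n → ℝ) : n → ℝ :=
  (P x).mulVec fun j => fderiv ℝ H x (Pi.single j 1)

/-- The second Poisson structure of `N` coupled endemic SIRS populations, on `ℝ^{3N}` with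
coordinates `(S_a, I_a, R_a) = (x (a,0), x (a,1), x (a,2))`:
`π₂_{S_a I_a} = −β_a·S_a·I_a + μ_a·I_a`, `π₂_{S_a R_a} = β_a·S_a·I_a − μ_a·I_a`,
`π₂_{I_a R_a} = −β_a·S_a·I_a + μ_a·I_a`, `π₂_{R_a R_b} = τ_{ab}` for `a ≠ b`,
all other independent entries zero. -/
noncomputable def sirsIntPoisson2 (N : ℕ) (β μ : Fin N → ℝ) (τ : Fin N → Fin N → ℝ)
    (x : Fin N × Fin 3 → ℝ) : Matrix (Fin N × Fin 3) (Fin N × Fin 3) ℝ :=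
  fun p q =>
    if p.1 = q.1 then
      if p.2 = 0 ∧ q.2 = 1 then -β p.1 * x (p.1, 0) * x (p.1, 1) + μ p.1 * x (p.1, 1)
      else if p.2 = 1 ∧ q.2 = 0 then
        -(-β p.1 * x (p.1, 0) * x (p.1, 1) + μ p.1 * x (p.1, 1))
      else if p.2 = 0 ∧ q.2 = 2 then β p.1 * x (p.1, 0) * x (p.1, 1) - μ p.1 * x (p.1, 1)
      else if p.2 = 2 ∧ q.2 = 0 then
        -(β p.1 * x (p.1, 0) * x (p.1, 1) - μ p.1 * x (p.1, 1))
      else if p.2 = 1 ∧ q.2 = 2 then -β p.1 * x (p.1, 0) * x (p.1, 1) + μ p.1 * x (p.1, 1)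
      else if p.2 = 2 ∧ q.2 = 1 then
        -(-β p.1 * x (p.1, 0) * x (p.1, 1) + μ p.1 * x (p.1, 1))
      else 0
    else
      if p.2 = 2 ∧ q.2 = 2 then τ p.1 q.1 else 0

/-! Write `g_a = −β_a S_a I_a + μ_a I_a` and `C` for the constant skew matrix `sirsSkew`. The
diagonal block of population `a` is `g_a · C`, with `g_a` depending only on `S_a, I_a`, while the
couplings `τ` are constant and only link the `R` coordinates, which `g` does not see. So in the
Jacobiator the `l`-th summand vanishes unless `i, j, k, l` all lie in one block, and there it is
`g_a ∂_l g_a (C_{li} C_{jk} + C_{lj} C_{ki} + C_{lk} C_{ij})`, a `4 × 4` Pfaffian of the `3 × 3`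
skew matrix `C`, which vanishes because two of its four indices coincide. The vector field is
read off from `∇H₂ = (−α_a / (β_a S_a − μ_a), 0, −1)_a`. -/

open scoped Matrix

theorem Matrix.mul_add_mul_add_mul_eq_zero_of_fin_three (C : Matrix (Fin 3) (Fin 3) ℝ)
    (hC : Cᵀ = -C) (l i j k : Fin 3) :
    C l i * C j k + C l j * C k i + C l k * C i j = 0 := by
  have hskew : ∀ p q, C q p = -C p q := fun p q => by
    simpa using congrFun (congrFun hC p) q
  have hdiag : ∀ p, C p p = 0 := fun p => by linarith [hskew p p]
  have hC' : C = !![0, C 0 1, C 0 2; -C 0 1, 0, C 1 2; -C 0 2, -C 1 2, 0] := by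
    ext p q
    fin_cases p <;> fin_cases q <;> simp [hdiag, hskew 1 0, hskew 2 0, hskew 2 1]
  rw [hC']
  fin_cases l <;> fin_cases i <;> fin_cases j <;> fin_cases k <;> simp <;> ring

section SIRS

variable {N : ℕ} (α β μ : Fin N → ℝ) (τ : Fin N → Fin N → ℝ)

def sirsRate (a : Fin N) (x : Fin N × Fin 3 → ℝ) : ℝ :=
  -β a * x (a, 0) * x (a, 1) + μ a * x (a, 1)

def sirsSkew : Matrix (Fin 3) (Fin 3) ℝ :=
  !![0, 1, -1; -1, 0, 1; 1, -1, 0]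

theorem sirsSkew_transpose : sirsSkewᵀ = -sirsSkew := by
  ext p q; fin_cases p <;> fin_cases q <;> simp [sirsSkew]

theorem sirsIntPoisson2_apply (x : Fin N × Fin 3 → ℝ) (p q : Fin N × Fin 3) :
    sirsIntPoisson2 N β μ τ x p q =
      if p.1 = q.1 then sirsSkew p.2 q.2 * sirsRate β μ p.1 x
      else if p.2 = 2 ∧ q.2 = 2 then τ p.1 q.1 else 0 := by
  obtain ⟨a, m⟩ := p
  obtain ⟨b, n⟩ := q
  by_cases hab : a = b
  · subst hab
    fin_cases m <;> fin_cases n <;> simp [sirsIntPoisson2, sirsSkew, sirsRate] <;> ring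
  · simp [sirsIntPoisson2, hab]

theorem hasFDerivAt_sirsRate (a : Fin N) (x : Fin N × Fin 3 → ℝ) :
    HasFDerivAt (sirsRate β μ a)
      ((-β a * x (a, 1)) • (ContinuousLinearMap.proj (a, 0) : (Fin N × Fin 3 → ℝ) →L[ℝ] ℝ) +
        (-β a * x (a, 0) + μ a) • (ContinuousLinearMap.proj (a, 1) : (Fin N × Fin 3 → ℝ) →L[ℝ] ℝ))
      x := by
  have hS := (ContinuousLinearMap.proj (a, 0) : (Fin N × Fin 3 → ℝ) →L[ℝ] ℝ).hasFDerivAt (x := x)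
  have hI := (ContinuousLinearMap.proj (a, 1) : (Fin N × Fin 3 → ℝ) →L[ℝ] ℝ).hasFDerivAt (x := x)
  refine ((((hS.mul hI).const_mul (-β a)).add (hI.const_mul (μ a))).congr_fderiv ?_)
    |>.congr_of_eventuallyEq (Filter.Eventually.of_forall fun y => ?_)
  · ext v
    simp only [add_apply, smul_apply,
      ContinuousLinearMap.proj_apply, smul_eq_mul]
    ring
  · simp only [sirsRate, Pi.mul_apply, Pi.add_apply, ContinuousLinearMap.proj_apply]
    ring

theorem fderiv_sirsRate_single_eq_zero {a : Fin N} {l : Fin N × Fin 3} (hl : l.1 ≠ a ∨ l.2 = 2)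
    (x : Fin N × Fin 3 → ℝ) : fderiv ℝ (sirsRate β μ a) x (Pi.single l 1) = 0 := by
  obtain ⟨b, m⟩ := l
  rw [(hasFDerivAt_sirsRate β μ a x).fderiv]
  rcases hl with hb | rfl
  · simp [hb]
  · simp

theorem fderiv_sirsIntPoisson2_apply (x : Fin N × Fin 3 → ℝ) (j k l : Fin N × Fin 3) :
    fderiv ℝ (fun y => sirsIntPoisson2 N β μ τ y j k) x (Pi.single l 1) =
      if j.1 = k.1 then sirsSkew j.2 k.2 * fderiv ℝ (sirsRate β μ j.1) x (Pi.single l 1)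
      else 0 := by
  by_cases hjk : j.1 = k.1
  · simp only [sirsIntPoisson2_apply, hjk, if_true]
    rw [fderiv_const_mul (hasFDerivAt_sirsRate β μ k.1 x).differentiableAt]
    rfl
  · simp only [sirsIntPoisson2_apply, hjk, if_false, fderiv_const_apply]
    rfl

theorem sirsIntPoisson2_mul_fderiv_apply (x : Fin N × Fin 3 → ℝ) (i j k l : Fin N × Fin 3) :
    sirsIntPoisson2 N β μ τ x l i *
        fderiv ℝ (fun y => sirsIntPoisson2 N β μ τ y j k) x (Pi.single l 1) =
      if i.1 = l.1 ∧ j.1 = l.1 ∧ k.1 = l.1 then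
        sirsRate β μ l.1 x * fderiv ℝ (sirsRate β μ l.1) x (Pi.single l 1) *
          (sirsSkew l.2 i.2 * sirsSkew j.2 k.2)
      else 0 := by
  rw [fderiv_sirsIntPoisson2_apply, sirsIntPoisson2_apply]
  by_cases hjk : j.1 = k.1
  · by_cases hlj : j.1 = l.1
    · by_cases hil : i.1 = l.1
      · simp only [hil, hlj, ← hjk, and_self, if_true]; ring
      · have hne : ¬(i.1 = l.1 ∧ j.1 = l.1 ∧ k.1 = l.1) := fun h => hil h.1
        simp only [if_pos hjk, if_neg hne, if_neg (Ne.symm hil)]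
        by_cases hl2 : l.2 = 2
        · rw [fderiv_sirsRate_single_eq_zero β μ (Or.inr hl2), mul_zero, mul_zero]
        · rw [if_neg fun h => hl2 h.1, zero_mul]
    · rw [fderiv_sirsRate_single_eq_zero β μ (Or.inl (Ne.symm hlj))]
      simp [hlj]
  · simp only [hjk, if_false, mul_zero]
    exact (if_neg fun h => hjk (h.2.1.trans h.2.2.symm)).symm

theorem jacobiIdentityOn_sirsIntPoisson2 (U : Set (Fin N × Fin 3 → ℝ)) :
    JacobiIdentityOn (sirsIntPoisson2 N β μ τ) U := by
  intro x _ i j k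
  refine Finset.sum_eq_zero fun l _ => ?_
  simp only [sirsIntPoisson2_mul_fderiv_apply]
  by_cases h : i.1 = l.1 ∧ j.1 = l.1 ∧ k.1 = l.1
  · obtain ⟨hi, hj, hk⟩ := h
    simp only [hi, hj, hk, and_self, if_true, ← mul_add,
      Matrix.mul_add_mul_add_mul_eq_zero_of_fin_three _ sirsSkew_transpose, mul_zero]
  · rw [if_neg h, if_neg fun h' => h ⟨h'.2.2, h'.1, h'.2.1⟩,
      if_neg fun h' => h ⟨h'.2.1, h'.2.2, h'.1⟩, add_zero, add_zero]

theorem hamVF_sirsIntPoisson2_apply (H : (Fin N × Fin 3 → ℝ) → ℝ) (x : Fin N × Fin 3 → ℝ)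
    (a : Fin N) (m : Fin 3) :
    hamVF (sirsIntPoisson2 N β μ τ) H x (a, m) =
      sirsRate β μ a x * ∑ n, sirsSkew m n * fderiv ℝ H x (Pi.single (a, n) 1) +
        if m = 2 then ∑ b ∈ Finset.univ.erase a, τ a b * fderiv ℝ H x (Pi.single (b, 2) 1)
        else 0 := by
  simp only [hamVF, Matrix.mulVec, dotProduct, Fintype.sum_prod_type, sirsIntPoisson2_apply]
  rw [← Finset.add_sum_erase _ _ (Finset.mem_univ a)]
  congr 1
  · simp only [if_true, Finset.mul_sum]
    exact Finset.sum_congr rfl fun n _ => by ring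
  · split_ifs with hm
    · refine Finset.sum_congr rfl fun b hb => ?_
      simp [Ne.symm (Finset.ne_of_mem_erase hb), hm]
    · refine Finset.sum_eq_zero fun b hb => ?_
      simp [Ne.symm (Finset.ne_of_mem_erase hb), hm]

noncomputable def sirsHamiltonian2 (y : Fin N × Fin 3 → ℝ) : ℝ :=
  -∑ k, (y (k, 2) + α k / β k * Real.log (β k * y (k, 0) - μ k))

theorem fderiv_sirsHamiltonian2_single (hβ : ∀ a, β a ≠ 0) {x : Fin N × Fin 3 → ℝ}
    (hx : ∀ a, β a * x (a, 0) - μ a > 0) (q : Fin N × Fin 3) :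
    fderiv ℝ (sirsHamiltonian2 α β μ) x (Pi.single q 1) =
      ![-(α q.1 / (β q.1 * x (q.1, 0) - μ q.1)), 0, -1] q.2 := by
  have hsummand (k : Fin N) : HasFDerivAt
      (fun y : Fin N × Fin 3 → ℝ => y (k, 2) + α k / β k * Real.log (β k * y (k, 0) - μ k))
      ((ContinuousLinearMap.proj (k, 2) : (Fin N × Fin 3 → ℝ) →L[ℝ] ℝ) +
        (α k / (β k * x (k, 0) - μ k)) •
          (ContinuousLinearMap.proj (k, 0) : (Fin N × Fin 3 → ℝ) →L[ℝ] ℝ)) x := by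
    have hlog := ((((ContinuousLinearMap.proj (k, 0) : (Fin N × Fin 3 → ℝ) →L[ℝ] ℝ).hasFDerivAt
      (x := x)).const_mul (β k)).sub_const (μ k)).log (hx k).ne'
    refine ((ContinuousLinearMap.proj (k, 2)).hasFDerivAt.add
      (hlog.const_mul (α k / β k))).congr_fderiv ?_
    have hk := hβ k
    ext v
    simp only [add_apply, smul_apply,
      ContinuousLinearMap.proj_apply, smul_eq_mul]
    field_simp
  unfold sirsHamiltonian2
  rw [(HasFDerivAt.fun_sum (u := Finset.univ) fun k _ => hsummand k).fun_neg.fderiv]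
  obtain ⟨b, n⟩ := q
  fin_cases n <;> simp [Pi.single_apply]

theorem hamVF_sirsIntPoisson2_sirsHamiltonian2 (hβ : ∀ a, β a ≠ 0) {x : Fin N × Fin 3 → ℝ}
    (hx : ∀ a, β a * x (a, 0) - μ a > 0) (a : Fin N) :
    hamVF (sirsIntPoisson2 N β μ τ) (sirsHamiltonian2 α β μ) x (a, 0) =
        -β a * x (a, 0) * x (a, 1) + μ a * x (a, 1) ∧
      hamVF (sirsIntPoisson2 N β μ τ) (sirsHamiltonian2 α β μ) x (a, 1) =
        β a * x (a, 0) * x (a, 1) - (α a + μ a) * x (a, 1) ∧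
      hamVF (sirsIntPoisson2 N β μ τ) (sirsHamiltonian2 α β μ) x (a, 2) =
        α a * x (a, 1) - ∑ k ∈ Finset.univ.erase a, τ a k := by
  have hD := (hx a).ne'
  simp only [hamVF_sirsIntPoisson2_apply, fderiv_sirsHamiltonian2_single α β μ hβ hx,
    Fin.sum_univ_three, sirsSkew, sirsRate, Matrix.of_apply, Matrix.cons_val', Matrix.cons_val,
    Matrix.cons_val_zero, Matrix.cons_val_one, Matrix.cons_val_fin_one, Fin.reduceEq, if_true,
    if_false, mul_neg_one, Finset.sum_neg_distrib]
  refine ⟨?_, ?_, ?_⟩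
  · ring
  · field_simp; ring
  · field_simp; ring

end SIRS

theorem coupledEndemicSIRS_second_hamiltonian_structure_general (N : ℕ)
    (α β μ : Fin N → ℝ) (hβ : ∀ a, β a ≠ 0) (τ : Fin N → Fin N → ℝ) :
    JacobiIdentityOn (sirsIntPoisson2 N β μ τ)
      {x : Fin N × Fin 3 → ℝ | ∀ a, β a * x (a, 0) - μ a > 0} ∧
    (∀ x : Fin N × Fin 3 → ℝ, (∀ a, β a * x (a, 0) - μ a > 0) → ∀ a : Fin N,
      hamVF (sirsIntPoisson2 N β μ τ)
          (fun y => -∑ k : Fin N, (y (k, 2) + α k / β k * Real.log (β k * y (k, 0) - μ k)))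
          x (a, 0) =
        -β a * x (a, 0) * x (a, 1) + μ a * x (a, 1) ∧
      hamVF (sirsIntPoisson2 N β μ τ)
          (fun y => -∑ k : Fin N, (y (k, 2) + α k / β k * Real.log (β k * y (k, 0) - μ k)))
          x (a, 1) =
        β a * x (a, 0) * x (a, 1) - (α a + μ a) * x (a, 1) ∧
      hamVF (sirsIntPoisson2 N β μ τ)
          (fun y => -∑ k : Fin N, (y (k, 2) + α k / β k * Real.log (β k * y (k, 0) - μ k)))
          x (a, 2) =
        α a * x (a, 1) - ∑ k ∈ Finset.univ.erase a, τ a k) :=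
  ⟨jacobiIdentityOn_sirsIntPoisson2 β μ τ _,
    fun _ hx a => hamVF_sirsIntPoisson2_sirsHamiltonian2 α β μ τ hβ hx a⟩

/-- On `U = {x : β_a·S_a − μ_a > 0 for all a}`, the second structure of the coupled endemic
SIRS model satisfies the Jacobi identity, and with the Hamiltonian
`H₂ = −∑ₖ (R_k + (α_k/β_k)·log(β_k·S_k − μ_k))` its Hamiltonian vector field is the coupled
endemic SIRS vector field. -/
theorem coupledEndemicSIRS_second_hamiltonian_structure (N : ℕ) (hN : 1 ≤ N)
    (α β μ : Fin N → ℝ) (hβ : ∀ a, β a ≠ 0) (τ : Fin N → Fin N → ℝ)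
    (hτskew : ∀ a b, a ≠ b → τ a b = -τ b a) :
    JacobiIdentityOn (sirsIntPoisson2 N β μ τ)
      {x : Fin N × Fin 3 → ℝ | ∀ a, β a * x (a, 0) - μ a > 0} ∧
    (∀ x : Fin N × Fin 3 → ℝ, (∀ a, β a * x (a, 0) - μ a > 0) → ∀ a : Fin N,
      hamVF (sirsIntPoisson2 N β μ τ)
          (fun y => -∑ k : Fin N, (y (k, 2) + α k / β k * Real.log (β k * y (k, 0) - μ k)))
          x (a, 0) =
        -β a * x (a, 0) * x (a, 1) + μ a * x (a, 1) ∧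
      hamVF (sirsIntPoisson2 N β μ τ)
          (fun y => -∑ k : Fin N, (y (k, 2) + α k / β k * Real.log (β k * y (k, 0) - μ k)))
          x (a, 1) =
        β a * x (a, 0) * x (a, 1) - (α a + μ a) * x (a, 1) ∧
      hamVF (sirsIntPoisson2 N β μ τ)
          (fun y => -∑ k : Fin N, (y (k, 2) + α k / β k * Real.log (β k * y (k, 0) - μ k)))
          x (a, 2) =
        α a * x (a, 1) - ∑ k ∈ Finset.univ.erase a, τ a k) :=
  coupledEndemicSIRS_second_hamiltonian_structure_general N α β μ hβ τ
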